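/- arXiv:1304.6459 — 2 statements merged into one kernel-verified Lean document; each statement's English description precedes it below -/
import Mathlib

section
/- For every real number γ ≥ 0, the expected total number of friends Q(γ, n) satisfies: Q(γ, n) = Θ(n) if γ > 2; Q(γ, n) = Θ(n·log n) if γ = 2; Q(γ, n) = Θ(n^{3−γ}) if 1 < γ < 2; Q(γ, n) = Θ(n²/log n) if γ = 1; and Q(γ, n) = Θ(n²) if 0 ≤ γ < 1. -/
/-- `f(n) = Θ(h(n))`: there exist constants `0 < c₁ ≤ c₂` and `N₀` such that
`c₁·h(n) ≤ f(n) ≤ c₂·h(n)` for all integers `n ≥ N₀`. -/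
def IsBigTheta (f h : ℕ → ℝ) : Prop :=
  ∃ c₁ c₂ : ℝ, 0 < c₁ ∧ c₁ ≤ c₂ ∧ ∃ N₀ : ℕ, ∀ n : ℕ, N₀ ≤ n →
    c₁ * h n ≤ f n ∧ f n ≤ c₂ * h n

/-- Zipf normalization `Z(γ, n) = Σ_{j=1}^{n−1} j^{−γ}`. -/
noncomputable def Z (γ : ℝ) (n : ℕ) : ℝ := ∑ j ∈ Finset.Icc 1 (n - 1), (j : ℝ) ^ (-γ)

/-- Expected total number of friends `Q(γ, n) = n·Z(γ, n)⁻¹·Σ_{l=1}^{n−1} l^{1−γ}`. -/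
noncomputable def Q (γ : ℝ) (n : ℕ) : ℝ :=
  n * (Z γ n)⁻¹ * ∑ l ∈ Finset.Icc 1 (n - 1), (l : ℝ) ^ (1 - γ)

/-!
With `S_β(m) = ∑_{l=1}^m l^β` we have `Z γ n = S_{-γ}(n-1)` and `Q γ n = n · S_{1-γ}(n-1) / S_{-γ}(n-1)`,
so everything reduces to the order of a power sum: `S_β(m) = Θ(1)` for `β < -1` (a convergent
series), `Θ(log m)` for `β = -1` (harmonic numbers), and `Θ(m^{β+1})` for `β > -1`. In the last case
one bound compares every term with `m^β`, and the other telescopes `(β+1) l^β` against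
`l^{β+1} - (l-1)^{β+1}`, which Bernoulli's inequality for `(1 - 1/l)^{β+1}` compares in the right direction
according to the sign of `β`. The five regimes are the products of these orders.
-/

open Filter Asymptotics Finset

lemma isTheta_of_eventually_bounds {α : Type*} {l : Filter α} {f g : α → ℝ} {c C : ℝ}
    (hc : 0 < c) (h : ∀ᶠ x in l, 0 ≤ g x ∧ c * g x ≤ f x ∧ f x ≤ C * g x) : f =Θ[l] g := by
  refine ⟨.of_bound C (h.mono fun x ⟨hg, hlo, hup⟩ => ?_),
    .of_bound c⁻¹ (h.mono fun x ⟨hg, hlo, hup⟩ => ?_)⟩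
  all_goals rw [Real.norm_of_nonneg hg, Real.norm_of_nonneg (by nlinarith)]
  · exact hup
  · rwa [le_inv_mul_iff₀ hc]

lemma Asymptotics.IsTheta.isBigTheta {f g : ℕ → ℝ} (h : f =Θ[atTop] g)
    (hf : 0 ≤ᶠ[atTop] f) (hg : 0 ≤ᶠ[atTop] g) : IsBigTheta f g := by
  obtain ⟨C, -, hC⟩ := h.1.exists_pos
  obtain ⟨c, hc, hc'⟩ := h.2.exists_pos
  obtain ⟨N, hN⟩ := eventually_atTop.1 (hf.and (hg.and (hC.bound.and hc'.bound)))
  refine ⟨c⁻¹, max c⁻¹ C, inv_pos.2 hc, le_max_left _ _, N, fun n hn => ?_⟩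
  obtain ⟨hfn, hgn, hup, hlo⟩ := hN n hn
  rw [Real.norm_of_nonneg hfn, Real.norm_of_nonneg hgn] at hup hlo
  exact ⟨by rwa [inv_mul_le_iff₀ hc],
    hup.trans (mul_le_mul_of_nonneg_right (le_max_right _ _) hgn)⟩

lemma Asymptotics.IsTheta.comp_sub_one {f g : ℕ → ℝ} (h : f =Θ[atTop] g) :
    (fun n => f (n - 1)) =Θ[atTop] fun n => g (n - 1) :=
  ⟨h.1.comp_tendsto (tendsto_sub_atTop_nat 1), h.2.comp_tendsto (tendsto_sub_atTop_nat 1)⟩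

lemma natCast_sub_one_isTheta : (fun n : ℕ => ((n - 1 : ℕ) : ℝ)) =Θ[atTop] fun n => (n : ℝ) := by
  refine isTheta_of_eventually_bounds (c := 2⁻¹) (C := 1) (by norm_num) ?_
  filter_upwards [eventually_ge_atTop 2] with n hn
  have : (2 : ℝ) ≤ n := by exact_mod_cast hn
  rw [Nat.cast_sub (by omega)]
  refine ⟨n.cast_nonneg, ?_, ?_⟩ <;> push_cast <;> linarith

lemma sum_Icc_rpow_sub_rpow_sub_one {p : ℝ} (hp : 0 < p) (m : ℕ) :
    ∑ l ∈ Icc 1 m, ((l : ℝ) ^ p - ((l : ℝ) - 1) ^ p) = (m : ℝ) ^ p := by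
  induction m with
  | zero => simp [Real.zero_rpow hp.ne']
  | succ m ih =>
    rw [sum_Icc_succ_top (by omega), ih]
    push_cast
    rw [add_sub_cancel_right]
    ring

section Bernoulli

variable {β x : ℝ}

lemma sub_one_rpow_eq_mul (hx : 1 ≤ x) (p : ℝ) : (x - 1) ^ p = x ^ p * (1 + -x⁻¹) ^ p := by
  have hx0 : 0 < x := by linarith
  rw [← Real.mul_rpow hx0.le (by simpa using inv_le_one_of_one_le₀ hx)]
  congr 1
  field_simp
  ring

lemma rpow_add_one_mul_one_sub_inv (hx : 1 ≤ x) :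
    x ^ (β + 1) * (1 + (β + 1) * -x⁻¹) = x ^ (β + 1) - (β + 1) * x ^ β := by
  rw [Real.rpow_add_one (by positivity)]
  field_simp
  ring

lemma rpow_add_one_sub_rpow_sub_one_le (hβ : 0 ≤ β) (hx : 1 ≤ x) :
    x ^ (β + 1) - (x - 1) ^ (β + 1) ≤ (β + 1) * x ^ β := by
  have bernoulli := one_add_mul_self_le_rpow_one_add (s := -x⁻¹)
    (by simpa using inv_le_one_of_one_le₀ hx) (p := β + 1) (by linarith)
  have := mul_le_mul_of_nonneg_left bernoulli (Real.rpow_nonneg (by linarith : 0 ≤ x) (β + 1))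
  rw [rpow_add_one_mul_one_sub_inv hx, ← sub_one_rpow_eq_mul hx] at this
  linarith

lemma le_rpow_add_one_sub_rpow_sub_one (hβ₁ : -1 < β) (hβ₀ : β ≤ 0) (hx : 1 ≤ x) :
    (β + 1) * x ^ β ≤ x ^ (β + 1) - (x - 1) ^ (β + 1) := by
  have bernoulli := rpow_one_add_le_one_add_mul_self (s := -x⁻¹)
    (by simpa using inv_le_one_of_one_le₀ hx) (p := β + 1) (by linarith) (by linarith)
  have := mul_le_mul_of_nonneg_left bernoulli (Real.rpow_nonneg (by linarith : 0 ≤ x) (β + 1))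
  rw [rpow_add_one_mul_one_sub_inv hx, ← sub_one_rpow_eq_mul hx] at this
  linarith

end Bernoulli

noncomputable def powerSum (β : ℝ) (m : ℕ) : ℝ := ∑ l ∈ Icc 1 m, (l : ℝ) ^ β

section PowerSum

variable {β : ℝ}

lemma powerSum_nonneg (β : ℝ) (m : ℕ) : 0 ≤ powerSum β m :=
  sum_nonneg fun l _ => Real.rpow_nonneg l.cast_nonneg β

lemma one_le_powerSum (β : ℝ) {m : ℕ} (hm : 1 ≤ m) : 1 ≤ powerSum β m := by
  simpa [powerSum] using single_le_sum (f := fun l : ℕ => (l : ℝ) ^ β)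
    (fun l _ => Real.rpow_nonneg l.cast_nonneg β) (mem_Icc.2 ⟨le_rfl, hm⟩)

lemma powerSum_le_tsum (hβ : β < -1) (m : ℕ) : powerSum β m ≤ ∑' l : ℕ, (l : ℝ) ^ β :=
  (Real.summable_nat_rpow.2 hβ).sum_le_tsum _ fun l _ => Real.rpow_nonneg l.cast_nonneg β

lemma powerSum_neg_one (m : ℕ) : powerSum (-1) m = harmonic m := by
  rw [harmonic_eq_sum_Icc, powerSum]
  push_cast
  exact sum_congr rfl fun l _ => Real.rpow_neg_one _

lemma natCast_mul_rpow_le_powerSum (hβ : β ≤ 0) (m : ℕ) : (m : ℝ) * (m : ℝ) ^ β ≤ powerSum β m := by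
  simpa [powerSum] using card_nsmul_le_sum (Icc 1 m) (fun l : ℕ => (l : ℝ) ^ β) _ fun l hl =>
    Real.rpow_le_rpow_of_nonpos (by have := (mem_Icc.1 hl).1; positivity)
      (Nat.cast_le.2 (mem_Icc.1 hl).2) hβ

lemma powerSum_le_natCast_mul_rpow (hβ : 0 ≤ β) (m : ℕ) : powerSum β m ≤ (m : ℝ) * (m : ℝ) ^ β := by
  simpa [powerSum] using sum_le_card_nsmul (Icc 1 m) (fun l : ℕ => (l : ℝ) ^ β) _ fun l hl =>
    Real.rpow_le_rpow l.cast_nonneg (Nat.cast_le.2 (mem_Icc.1 hl).2) hβ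

lemma powerSum_le_rpow_add_one_div (hβ₁ : -1 < β) (hβ₀ : β ≤ 0) (m : ℕ) :
    powerSum β m ≤ (m : ℝ) ^ (β + 1) / (β + 1) := by
  rw [le_div_iff₀ (by linarith), ← sum_Icc_rpow_sub_rpow_sub_one (by linarith), powerSum, sum_mul]
  refine sum_le_sum fun l hl => ?_
  rw [mul_comm]
  exact le_rpow_add_one_sub_rpow_sub_one hβ₁ hβ₀ (Nat.one_le_cast.2 (mem_Icc.1 hl).1)

lemma rpow_add_one_div_le_powerSum (hβ : 0 ≤ β) (m : ℕ) :
    (m : ℝ) ^ (β + 1) / (β + 1) ≤ powerSum β m := by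
  rw [div_le_iff₀ (by linarith), ← sum_Icc_rpow_sub_rpow_sub_one (by linarith), powerSum, sum_mul]
  refine sum_le_sum fun l hl => ?_
  rw [mul_comm]
  exact rpow_add_one_sub_rpow_sub_one_le hβ (Nat.one_le_cast.2 (mem_Icc.1 hl).1)

lemma powerSum_isTheta_one (hβ : β < -1) : powerSum β =Θ[atTop] fun _ => (1 : ℝ) := by
  refine isTheta_of_eventually_bounds one_pos (C := ∑' l : ℕ, (l : ℝ) ^ β) ?_
  filter_upwards [eventually_ge_atTop 1] with m hm
  simpa using ⟨one_le_powerSum β hm, powerSum_le_tsum hβ m⟩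

lemma powerSum_neg_one_isTheta_log :
    powerSum (-1) =Θ[atTop] fun m => Real.log ((m + 1 : ℕ) : ℝ) := by
  refine isTheta_of_eventually_bounds one_pos (C := 2) ?_
  filter_upwards [eventually_ge_atTop 2] with m hm
  have hm' : (2 : ℝ) ≤ m := by exact_mod_cast hm
  have hlog : Real.log m ≤ Real.log ((m + 1 : ℕ) : ℝ) :=
    Real.log_le_log (by linarith) (by push_cast; linarith)
  have hlog_one : 1 ≤ Real.log ((m + 1 : ℕ) : ℝ) := by
    rw [Real.le_log_iff_exp_le (by positivity)]
    push_cast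
    linarith [Real.exp_one_lt_d9]
  rw [powerSum_neg_one]
  refine ⟨by linarith, by simpa using log_add_one_le_harmonic m, ?_⟩
  linarith [harmonic_le_one_add_log m]

lemma powerSum_isTheta_rpow (hβ : -1 < β) :
    powerSum β =Θ[atTop] fun m => (m : ℝ) ^ (β + 1) := by
  have hp : 0 < β + 1 := by linarith
  have hmul : ∀ᶠ m : ℕ in atTop, (m : ℝ) * (m : ℝ) ^ β = (m : ℝ) ^ (β + 1) := by
    filter_upwards [eventually_ge_atTop 1] with m hm
    rw [Real.rpow_add_one (by positivity), mul_comm]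
  rcases le_total β 0 with hβ₀ | hβ₀
  · refine isTheta_of_eventually_bounds one_pos (C := (β + 1)⁻¹) (hmul.mono fun m hm => ?_)
    refine ⟨by positivity, ?_, ?_⟩
    · rw [one_mul, ← hm]
      exact natCast_mul_rpow_le_powerSum hβ₀ m
    · rw [← div_eq_inv_mul]
      exact powerSum_le_rpow_add_one_div hβ hβ₀ m
  · refine isTheta_of_eventually_bounds (inv_pos.2 hp) (C := 1) (hmul.mono fun m hm => ?_)
    refine ⟨by positivity, ?_, ?_⟩
    · rw [← div_eq_inv_mul]
      exact rpow_add_one_div_le_powerSum hβ₀ m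
    · rw [one_mul, ← hm]
      exact powerSum_le_natCast_mul_rpow hβ₀ m

lemma powerSum_sub_one_isTheta_log :
    (fun n => powerSum (-1) (n - 1)) =Θ[atTop] fun n => Real.log n := by
  refine powerSum_neg_one_isTheta_log.comp_sub_one.trans_eventuallyEq ?_
  filter_upwards [eventually_ge_atTop 1] with n hn
  rw [Nat.sub_add_cancel hn]

lemma powerSum_sub_one_isTheta_rpow (hβ : -1 < β) :
    (fun n => powerSum β (n - 1)) =Θ[atTop] fun n => (n : ℝ) ^ (β + 1) :=
  (powerSum_isTheta_rpow hβ).comp_sub_one.trans <|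
    natCast_sub_one_isTheta.rpow (.of_forall fun _ => Nat.cast_nonneg _)
      (.of_forall fun _ => Nat.cast_nonneg _)

end PowerSum

lemma Q_eq_powerSum (γ : ℝ) (n : ℕ) :
    Q γ n = n * (powerSum (-γ) (n - 1))⁻¹ * powerSum (1 - γ) (n - 1) := rfl

lemma isBigTheta_Q {γ : ℝ} {a b h : ℕ → ℝ}
    (ha : (fun n => powerSum (-γ) (n - 1)) =Θ[atTop] a)
    (hb : (fun n => powerSum (1 - γ) (n - 1)) =Θ[atTop] b)
    (hh : ∀ᶠ n : ℕ in atTop, (n : ℝ) * (a n)⁻¹ * b n = h n) (h_nonneg : 0 ≤ᶠ[atTop] h) :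
    IsBigTheta (Q γ) h := by
  refine IsTheta.isBigTheta ?_ (.of_forall fun n => ?_) h_nonneg
  · exact (((isTheta_refl _ _).mul ha.inv).mul hb).trans_eventuallyEq hh
  · rw [Q_eq_powerSum]
    have := powerSum_nonneg (-γ) (n - 1)
    have := powerSum_nonneg (1 - γ) (n - 1)
    positivity

theorem expected_total_friends_order_general (γ : ℝ) :
    (2 < γ → IsBigTheta (fun n => Q γ n) (fun n => (n : ℝ))) ∧
    (γ = 2 → IsBigTheta (fun n => Q γ n) (fun n => (n : ℝ) * Real.log n)) ∧
    (1 < γ ∧ γ < 2 → IsBigTheta (fun n => Q γ n) (fun n => (n : ℝ) ^ (3 - γ))) ∧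
    (γ = 1 → IsBigTheta (fun n => Q γ n) (fun n => (n : ℝ) ^ 2 / Real.log n)) ∧
    (γ < 1 → IsBigTheta (fun n => Q γ n) (fun n => (n : ℝ) ^ 2)) := by
  have hlog : 0 ≤ᶠ[atTop] fun n : ℕ => Real.log n :=
    (eventually_ge_atTop 1).mono fun n hn => Real.log_nonneg (Nat.one_le_cast.2 hn)
  refine ⟨fun hγ => ?_, fun hγ => ?_, fun ⟨hγ₁, hγ₂⟩ => ?_, fun hγ => ?_, fun hγ => ?_⟩
  · exact isBigTheta_Q (powerSum_isTheta_one (by linarith)).comp_sub_one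
      (powerSum_isTheta_one (by linarith)).comp_sub_one (.of_forall fun n => by simp)
      (.of_forall fun n => n.cast_nonneg)
  · subst hγ
    exact isBigTheta_Q (powerSum_isTheta_one (by norm_num)).comp_sub_one
      (b := fun n => Real.log n) (by norm_num [powerSum_sub_one_isTheta_log])
      (.of_forall fun n => by simp)
      (hlog.mono fun n hn => by positivity)
  · refine isBigTheta_Q (powerSum_isTheta_one (by linarith)).comp_sub_one
      (powerSum_sub_one_isTheta_rpow (by linarith)) ?_ (.of_forall fun n => by positivity)
    filter_upwards [eventually_ge_atTop 1] with n hn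
    rw [show 3 - γ = 1 - γ + 1 + 1 by ring, Real.rpow_add_one (by positivity) (1 - γ + 1)]
    ring
  · subst hγ
    refine isBigTheta_Q (a := fun n => Real.log n) (by norm_num [powerSum_sub_one_isTheta_log])
      (powerSum_sub_one_isTheta_rpow (by norm_num)) (.of_forall fun n => ?_)
      (hlog.mono fun n hn => by positivity)
    norm_num
    ring
  · refine isBigTheta_Q (powerSum_sub_one_isTheta_rpow (by linarith))
      (powerSum_sub_one_isTheta_rpow (by linarith)) ?_ (.of_forall fun n => by positivity)
    filter_upwards [eventually_ge_atTop 1] with n hn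
    have hn₀ : (n : ℝ) ≠ 0 := by positivity
    rw [show 1 - γ + 1 = -γ + 1 + 1 by ring, Real.rpow_add_one hn₀ (-γ + 1)]
    field_simp [(Real.rpow_pos_of_pos (by positivity : (0 : ℝ) < n) (-γ + 1)).ne']

theorem expected_total_friends_order (γ : ℝ) (hγ : 0 ≤ γ) :
    (2 < γ → IsBigTheta (fun n => Q γ n) (fun n => (n : ℝ))) ∧
    (γ = 2 → IsBigTheta (fun n => Q γ n) (fun n => (n : ℝ) * Real.log n)) ∧
    (1 < γ ∧ γ < 2 → IsBigTheta (fun n => Q γ n) (fun n => (n : ℝ) ^ (3 - γ))) ∧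
    (γ = 1 → IsBigTheta (fun n => Q γ n) (fun n => (n : ℝ) ^ 2 / Real.log n)) ∧
    (γ < 1 → IsBigTheta (fun n => Q γ n) (fun n => (n : ℝ) ^ 2)) :=
  expected_total_friends_order_general γ
end

section
/- For all real numbers γ, β ≥ 0, the quantity H(γ, β, n) := g(β, n)·A(γ, n) + Q(γ, n) (the deterministic core of the transport-complexity lower bound for social-broadcast) satisfies: if γ > 2, H = Θ(n) for β > 2, Θ(n·log n) for β = 2, Θ(n^{2−β/2}) for 1 < β < 2, Θ(n^{3/2}/√(log n)) for β = 1, Θ(n^{3/2}) for 0 ≤ β < 1; if γ = 2, H = Θ(n·log n) for β ≥ 2, Θ(n^{2−β/2}) for 1 < β < 2, Θ(n^{3/2}/√(log n)) for β = 1, Θ(n^{3/2}) for 0 ≤ β < 1; if 3/2 < γ < 2, H = Θ(n^{3−γ}) for β ≥ 2γ−2, Θ(n^{2−β/2}) for 1 < β < 2γ−2, Θ(n^{3/2}/√(log n)) for β = 1, Θ(n^{3/2}) for 0 ≤ β < 1; if γ = 3/2, H = Θ(n^{3/2}) for β > 1, Θ(n^{3/2}·√(log n)) for β = 1, Θ(n^{3/2}·log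 n) for 0 ≤ β < 1; if 1 < γ < 3/2, H = Θ(n^{3−γ}) for all β ≥ 0; if γ = 1, H = Θ(n²/log n) for all β ≥ 0; and if 0 ≤ γ < 1, H = Θ(n²) for all β ≥ 0. -/
/-- `A(γ, n) = n·Z(γ, n)⁻¹·Σ_{l=1}^{n−1} l^{1/2−γ}`. -/
noncomputable def A (γ : ℝ) (n : ℕ) : ℝ :=
  n * (Z γ n)⁻¹ * ∑ l ∈ Finset.Icc 1 (n - 1), (l : ℝ) ^ (1 / 2 - γ)

/-- `g(β, n)`: `1` if `β > 2`; `log n` if `β = 2`; `n^{1−β/2}` if `1 < β < 2`;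
`√(n/log n)` if `β = 1`; `√n` if `0 ≤ β < 1`. -/
noncomputable def g (β : ℝ) (n : ℕ) : ℝ :=
  if 2 < β then 1
  else if β = 2 then Real.log n
  else if 1 < β then (n : ℝ) ^ (1 - β / 2)
  else if β = 1 then Real.sqrt ((n : ℝ) / Real.log n)
  else Real.sqrt n

/-- `H(γ, β, n) = g(β, n)·A(γ, n) + Q(γ, n)`, the deterministic core of the
transport-complexity lower bound for social-broadcast. -/
noncomputable def H (γ β : ℝ) (n : ℕ) : ℝ := g β n * A γ n + Q γ n

/-!
Every quantity in `H` is, up to constant factors, of the form `n ^ a * (log n) ^ b`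
(`powLog a b`), and since `log n = o(n ^ ε)` these functions are ordered by the lexicographic
order on `(a, b)`. The power sums `∑_{l<n} l ^ α` are `Θ(n ^ (α + 1))`, `Θ(log n)` or `Θ(1)`
according as `α > -1`, `α = -1` or `α < -1` (comparison with `∫ x ^ α`, harmonic numbers,
summability of `l ^ α`); this gives the Θ-classes of `Z`, `Q` and `A`, while `g β` is itself
of the form `powLog`. Since all terms are nonnegative, `H = g·A + Q` is Θ of the larger of its
two summands, and comparing exponents case by case gives the table.
-/

open Asymptotics Filter Finset Real

lemma isTheta_of_eventually_bounds_s10 {f t : ℕ → ℝ} (hf : 0 ≤ f) (ht : 0 ≤ t) {c₁ c₂ : ℝ}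
    (hc₁ : 0 < c₁) (h : ∀ᶠ n in atTop, c₁ * t n ≤ f n ∧ f n ≤ c₂ * t n) : f =Θ[atTop] t := by
  refine ⟨IsBigO.of_bound c₂ ?_, IsBigO.of_bound c₁⁻¹ ?_⟩ <;>
    filter_upwards [h] with n hn <;>
    simp only [Real.norm_of_nonneg (hf n), Real.norm_of_nonneg (ht n)]
  · exact hn.2
  · rw [le_inv_mul_iff₀ hc₁]; exact hn.1

lemma isBigTheta_of_isTheta {f t : ℕ → ℝ} (hf : 0 ≤ f) (ht : 0 ≤ t) (h : f =Θ[atTop] t) :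
    IsBigTheta f t := by
  obtain ⟨c₂, -, hup⟩ := h.isBigO.exists_pos
  obtain ⟨c, hc, hlow⟩ := h.symm.isBigO.exists_pos
  obtain ⟨N, hN⟩ := eventually_atTop.1 (hup.bound.and hlow.bound)
  refine ⟨c⁻¹, max c₂ c⁻¹, inv_pos.2 hc, le_max_right _ _, N, fun n hn => ?_⟩
  have hbounds := hN n hn
  simp only [Real.norm_of_nonneg (hf n), Real.norm_of_nonneg (ht n)] at hbounds
  constructor
  · rw [inv_mul_le_iff₀ hc]; exact hbounds.2
  · exact hbounds.1.trans (by gcongr; exacts [ht n, le_max_left _ _])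

lemma Asymptotics.IsTheta.add_isBigO_of_nonneg {f₁ f₂ t : ℕ → ℝ} (hf₁ : 0 ≤ f₁) (hf₂ : 0 ≤ f₂)
    (h₁ : f₁ =Θ[atTop] t) (h₂ : f₂ =O[atTop] t) : (f₁ + f₂) =Θ[atTop] t := by
  refine ⟨h₁.isBigO.add h₂, h₁.symm.isBigO.trans (isBigO_of_le _ fun n => ?_)⟩
  simp only [Pi.add_apply, Real.norm_of_nonneg (hf₁ n),
    Real.norm_of_nonneg (add_nonneg (hf₁ n) (hf₂ n))]
  exact le_add_of_nonneg_right (hf₂ n)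

lemma eventually_one_le_log : ∀ᶠ n : ℕ in atTop, 1 ≤ Real.log n :=
  (tendsto_log_atTop.comp tendsto_natCast_atTop_atTop).eventually_ge_atTop 1

noncomputable def powLog (a b : ℝ) (n : ℕ) : ℝ := (n : ℝ) ^ a * Real.log n ^ b

lemma powLog_nonneg (a b : ℝ) : 0 ≤ powLog a b := fun n => by
  unfold powLog; have := log_natCast_nonneg n; positivity

lemma powLog_mul_powLog (a b c d : ℝ) :
    (fun n => powLog a b n * powLog c d n) =ᶠ[atTop] powLog (a + c) (b + d) := by
  filter_upwards [eventually_ge_atTop 2] with n hn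
  have hn' : (1 : ℝ) < n := by exact_mod_cast hn
  simp only [powLog, rpow_add (zero_lt_one.trans hn'), rpow_add (log_pos hn')]
  ring

lemma powLog_neg (a b : ℝ) (n : ℕ) : powLog (-a) (-b) n = (powLog a b n)⁻¹ := by
  simp only [powLog, rpow_neg (Nat.cast_nonneg n), rpow_neg (log_natCast_nonneg n), mul_inv]

lemma powLog_isBigO_of_le {a b c d : ℝ} (hac : a ≤ c) (hbd : b ≤ d) :
    powLog a b =O[atTop] powLog c d := by
  refine IsBigO.of_bound' ?_
  filter_upwards [eventually_ge_atTop 1, eventually_one_le_log] with n hn hlog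
  rw [Real.norm_of_nonneg (powLog_nonneg a b n), Real.norm_of_nonneg (powLog_nonneg c d n)]
  unfold powLog
  gcongr
  exact_mod_cast hn

lemma powLog_isLittleO_of_lt {a c : ℝ} (hac : a < c) (b d : ℝ) :
    powLog a b =o[atTop] powLog c d := by
  have hlog : (fun n : ℕ => powLog 0 (b - d) n) =o[atTop] fun n => powLog (c - a) 0 n := by
    simpa [powLog, Function.comp_def] using
      (isLittleO_log_rpow_rpow_atTop (b - d) (sub_pos.2 hac)).comp_tendsto
        tendsto_natCast_atTop_atTop
  refine ((isBigO_refl (powLog a d) atTop).mul_isLittleO hlog).congr' ?_ ?_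
  · filter_upwards [powLog_mul_powLog a d 0 (b - d)] with n hn
    rw [hn]; ring_nf
  · filter_upwards [powLog_mul_powLog a d (c - a) 0] with n hn
    rw [hn]; ring_nf

lemma Asymptotics.IsTheta.mul_powLog {f f' : ℕ → ℝ} {a b c d : ℝ} (h : f =Θ[atTop] powLog a b)
    (h' : f' =Θ[atTop] powLog c d) :
    (fun n => f n * f' n) =Θ[atTop] powLog (a + c) (b + d) :=
  (h.mul h').trans_eventuallyEq (powLog_mul_powLog a b c d)

lemma Asymptotics.IsBigO.mul_powLog {f f' : ℕ → ℝ} {a b c d : ℝ} (h : f =O[atTop] powLog a b)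
    (h' : f' =O[atTop] powLog c d) :
    (fun n => f n * f' n) =O[atTop] powLog (a + c) (b + d) :=
  (h.mul h').trans_eventuallyEq (powLog_mul_powLog a b c d)

/-- `Z γ` is `powSum (-γ)` by definition, and the sums in `Q γ` and `A γ` are
`powSum (1 - γ)` and `powSum (1 / 2 - γ)`. -/
noncomputable def powSum (α : ℝ) (n : ℕ) : ℝ := ∑ l ∈ Icc 1 (n - 1), (l : ℝ) ^ α

lemma powSum_nonneg (α : ℝ) : 0 ≤ powSum α := fun n => by unfold powSum; positivity

lemma powSum_eq_sum_range (α : ℝ) (n : ℕ) :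
    powSum α n = ∑ i ∈ range (n - 1), ((i + 1 : ℕ) : ℝ) ^ α := by
  rw [powSum, ← Ico_add_one_right_eq_Icc, sum_Ico_eq_sum_range]
  simp [add_comm]

lemma powSum_le_of_nonneg {α : ℝ} (hα : 0 ≤ α) (n : ℕ) : powSum α n ≤ (n : ℝ) ^ (α + 1) := by
  calc powSum α n ≤ ∑ _l ∈ Icc 1 (n - 1), (n : ℝ) ^ α := by
        refine sum_le_sum fun l hl => ?_
        have := (mem_Icc.1 hl).2
        gcongr
        omega
    _ ≤ (n : ℝ) * (n : ℝ) ^ α := by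
        rw [sum_const, Nat.card_Icc, nsmul_eq_mul]
        gcongr
        simp
    _ = (n : ℝ) ^ (α + 1) := by
        rcases n.eq_zero_or_pos with rfl | hn
        · simp [zero_rpow (by linarith : α + 1 ≠ 0)]
        · rw [rpow_add_one (by positivity)]; ring

lemma le_powSum_of_nonpos {α : ℝ} (hα : α ≤ 0) {n : ℕ} (hn : 2 ≤ n) :
    (n : ℝ) ^ (α + 1) / 2 ≤ powSum α n := by
  have hn' : (2 : ℝ) ≤ n := by exact_mod_cast hn
  calc (n : ℝ) ^ (α + 1) / 2 = (n / 2) * (n : ℝ) ^ α := by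
        rw [rpow_add_one (by positivity)]; ring
    _ ≤ ((n - 1 : ℕ) : ℝ) * (n : ℝ) ^ α := by
        gcongr
        rw [Nat.cast_sub (by omega)]
        linarith
    _ = ∑ _l ∈ Icc 1 (n - 1), (n : ℝ) ^ α := by
        rw [sum_const, Nat.card_Icc, nsmul_eq_mul]; simp
    _ ≤ powSum α n := by
        refine sum_le_sum fun l hl => ?_
        have hl := mem_Icc.1 hl
        exact rpow_le_rpow_of_nonpos (by exact_mod_cast hl.1)
          (by exact_mod_cast (by omega : l ≤ n)) hα

lemma integral_rpow_le_powSum {α : ℝ} (hα : 0 ≤ α) (n : ℕ) :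
    ((n - 1 : ℕ) : ℝ) ^ (α + 1) / (α + 1) ≤ powSum α n := by
  have hmono : MonotoneOn (fun x : ℝ => x ^ α) (Set.Icc 0 (0 + ((n - 1 : ℕ) : ℝ))) :=
    fun x hx y _ hxy => rpow_le_rpow hx.1 hxy hα
  have := hmono.integral_le_sum
  rw [zero_add, integral_rpow (.inl (by linarith)), zero_rpow (by linarith), sub_zero] at this
  simpa [powSum_eq_sum_range] using this

/-- Compared with `1 + ∫_1^n x ^ α` rather than `∫_0^n x ^ α`: since `0 ^ α = 0`, the function
`x ↦ x ^ α` is not antitone on `[0, n]`. -/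
lemma powSum_le_integral_rpow {α : ℝ} (hα₁ : -1 < α) (hα₀ : α ≤ 0) (n : ℕ) :
    powSum α n ≤ 1 + (n : ℝ) ^ (α + 1) / (α + 1) := by
  have hα : 0 < α + 1 := by linarith
  rcases Nat.lt_or_ge n 2 with hn | hn
  · interval_cases n <;> simp [powSum] <;> positivity
  obtain ⟨m, rfl⟩ : ∃ m, n = m + 2 := ⟨n - 2, by omega⟩
  have hanti : AntitoneOn (fun x : ℝ => x ^ α) (Set.Icc 1 (1 + (m : ℝ))) :=
    fun x hx y _ hxy => rpow_le_rpow_of_nonpos (by linarith [hx.1]) hxy hα₀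
  have hsum := hanti.sum_le_integral
  rw [integral_rpow (.inl hα₁), one_rpow] at hsum
  have hmono : (1 + (m : ℝ)) ^ (α + 1) ≤ ((m + 2 : ℕ) : ℝ) ^ (α + 1) :=
    rpow_le_rpow (by positivity) (by push_cast; linarith) hα.le
  rw [powSum_eq_sum_range, show m + 2 - 1 = m + 1 by omega, sum_range_succ']
  push_cast at hsum hmono ⊢
  ring_nf at hsum hmono ⊢
  have hinv : 0 ≤ (1 + α)⁻¹ := inv_nonneg.2 (by linarith)
  rw [one_rpow]
  linarith [mul_le_mul_of_nonneg_right hmono hinv]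

lemma powSum_isTheta_of_neg_one_lt {α : ℝ} (hα : -1 < α) :
    powSum α =Θ[atTop] powLog (α + 1) 0 := by
  have hα₁ : 0 < α + 1 := by linarith
  rw [show powLog (α + 1) 0 = fun n : ℕ => (n : ℝ) ^ (α + 1) from
    funext fun n => by simp [powLog]]
  rcases le_or_gt 0 α with hα₀ | hα₀
  · refine isTheta_of_eventually_bounds_s10 (powSum_nonneg α) (fun n => by positivity)
      (c₁ := (1 / 2) ^ (α + 1) / (α + 1)) (c₂ := 1) (by positivity) ?_
    filter_upwards [eventually_ge_atTop 2] with n hn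
    refine ⟨le_trans ?_ (integral_rpow_le_powSum hα₀ n),
      by simpa using powSum_le_of_nonneg hα₀ n⟩
    have hn' : (2 : ℝ) ≤ n := by exact_mod_cast hn
    rw [div_mul_eq_mul_div, ← mul_rpow (by norm_num) (by positivity)]
    gcongr
    rw [Nat.cast_sub (by omega)]
    linarith
  · refine isTheta_of_eventually_bounds_s10 (powSum_nonneg α) (fun n => by positivity)
      (c₁ := 1 / 2) (c₂ := 1 + 1 / (α + 1)) (by positivity) ?_
    filter_upwards [eventually_ge_atTop 2] with n hn
    refine ⟨by linarith [le_powSum_of_nonpos hα₀.le hn], ?_⟩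
    have hone : 1 ≤ (n : ℝ) ^ (α + 1) :=
      one_le_rpow (by exact_mod_cast (by omega : 1 ≤ n)) hα₁.le
    have := powSum_le_integral_rpow hα hα₀.le n
    rw [add_mul, one_mul, div_mul_eq_mul_div, one_mul]
    linarith

lemma powSum_neg_one_isTheta : powSum (-1) =Θ[atTop] powLog 0 1 := by
  have hharm (n : ℕ) : powSum (-1) n = harmonic (n - 1) := by
    simp [powSum, harmonic_eq_sum_Icc, rpow_neg_one]
  refine isTheta_of_eventually_bounds_s10 (powSum_nonneg _) (powLog_nonneg 0 1)
    (c₁ := 1) (c₂ := 2) one_pos ?_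
  filter_upwards [eventually_ge_atTop 2, eventually_one_le_log] with n hn hlog
  have hlow := log_add_one_le_harmonic (n - 1)
  have hup := harmonic_le_one_add_log (n - 1)
  have hmono : Real.log ((n - 1 : ℕ) : ℝ) ≤ Real.log n :=
    log_le_log (by exact_mod_cast (by omega : 0 < n - 1)) (by exact_mod_cast Nat.sub_le n 1)
  rw [Nat.sub_add_cancel (by omega)] at hlow
  simp only [powLog, rpow_zero, rpow_one, one_mul, hharm]
  constructor <;> linarith

lemma powSum_isTheta_of_lt_neg_one {α : ℝ} (hα : α < -1) :
    powSum α =Θ[atTop] powLog 0 0 := by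
  have hsum := Real.summable_nat_rpow.2 hα
  rw [show powLog 0 0 = fun _ => 1 from funext fun n => by simp [powLog]]
  refine isTheta_of_eventually_bounds_s10 (powSum_nonneg α) (fun _ => zero_le_one)
    (c₁ := 1) (c₂ := ∑' l : ℕ, (l : ℝ) ^ α) one_pos ?_
  filter_upwards [eventually_ge_atTop 2] with n hn
  refine ⟨?_, ?_⟩ <;> simp only [powSum]
  · simpa using single_le_sum (f := fun l : ℕ => (l : ℝ) ^ α) (fun l _ => by positivity)
      (mem_Icc.2 ⟨le_rfl, by omega⟩ : 1 ∈ Icc 1 (n - 1))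
  · simpa using hsum.sum_le_tsum (Icc 1 (n - 1)) (fun l _ => by positivity)

lemma isTheta_natCast_mul_inv_mul {z s : ℕ → ℝ} {z₁ z₂ s₁ s₂ : ℝ}
    (hz : z =Θ[atTop] powLog z₁ z₂) (hs : s =Θ[atTop] powLog s₁ s₂) :
    (fun n : ℕ => (n : ℝ) * (z n)⁻¹ * s n) =Θ[atTop] powLog (1 - z₁ + s₁) (s₂ - z₂) := by
  have hn : (fun n : ℕ => (n : ℝ)) =Θ[atTop] powLog 1 0 :=
    (EventuallyEq.of_eq (funext fun n => by simp [powLog])).isTheta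
  have hz' : (fun n => (z n)⁻¹) =Θ[atTop] powLog (-z₁) (-z₂) :=
    hz.inv.trans_eventuallyEq (.of_eq (funext fun n => (powLog_neg z₁ z₂ n).symm))
  convert (hn.mul_powLog hz').mul_powLog hs using 2 <;> ring

section

variable {γ β : ℝ}

lemma Q_isTheta {z₁ z₂ s₁ s₂ : ℝ} (hZ : powSum (-γ) =Θ[atTop] powLog z₁ z₂)
    (hS : powSum (1 - γ) =Θ[atTop] powLog s₁ s₂) :
    Q γ =Θ[atTop] powLog (1 - z₁ + s₁) (s₂ - z₂) :=
  isTheta_natCast_mul_inv_mul hZ hS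

lemma A_isTheta {z₁ z₂ s₁ s₂ : ℝ} (hZ : powSum (-γ) =Θ[atTop] powLog z₁ z₂)
    (hS : powSum (1 / 2 - γ) =Θ[atTop] powLog s₁ s₂) :
    A γ =Θ[atTop] powLog (1 - z₁ + s₁) (s₂ - z₂) :=
  isTheta_natCast_mul_inv_mul hZ hS

lemma Q_isTheta_of_two_lt (hγ : 2 < γ) : Q γ =Θ[atTop] powLog 1 0 := by
  convert Q_isTheta (powSum_isTheta_of_lt_neg_one (by linarith))
    (powSum_isTheta_of_lt_neg_one (by linarith)) using 2 <;> norm_num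

lemma Q_two_isTheta : Q 2 =Θ[atTop] powLog 1 1 := by
  convert Q_isTheta (γ := 2) (powSum_isTheta_of_lt_neg_one (by norm_num))
    (by norm_num; exact powSum_neg_one_isTheta) using 2 <;> norm_num

lemma Q_isTheta_of_one_lt_of_lt_two (hγ₁ : 1 < γ) (hγ₂ : γ < 2) :
    Q γ =Θ[atTop] powLog (3 - γ) 0 := by
  convert Q_isTheta (powSum_isTheta_of_lt_neg_one (by linarith))
    (powSum_isTheta_of_neg_one_lt (by linarith)) using 2 <;> ring

lemma Q_one_isTheta : Q 1 =Θ[atTop] powLog 2 (-1) := by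
  convert Q_isTheta powSum_neg_one_isTheta
    (powSum_isTheta_of_neg_one_lt (by norm_num)) using 2 <;> norm_num

lemma Q_isTheta_of_lt_one (hγ : γ < 1) : Q γ =Θ[atTop] powLog 2 0 := by
  convert Q_isTheta (powSum_isTheta_of_neg_one_lt (by linarith))
    (powSum_isTheta_of_neg_one_lt (by linarith)) using 2 <;> ring

lemma A_isTheta_of_three_halves_lt (hγ : 3 / 2 < γ) : A γ =Θ[atTop] powLog 1 0 := by
  convert A_isTheta (powSum_isTheta_of_lt_neg_one (by linarith))
    (powSum_isTheta_of_lt_neg_one (by linarith)) using 2 <;> norm_num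

lemma A_three_halves_isTheta : A (3 / 2) =Θ[atTop] powLog 1 1 := by
  convert A_isTheta (γ := 3 / 2) (powSum_isTheta_of_lt_neg_one (by norm_num))
    (by norm_num; exact powSum_neg_one_isTheta) using 2 <;> norm_num

lemma A_isTheta_of_one_lt_of_lt_three_halves (hγ₁ : 1 < γ) (hγ₂ : γ < 3 / 2) :
    A γ =Θ[atTop] powLog (5 / 2 - γ) 0 := by
  convert A_isTheta (powSum_isTheta_of_lt_neg_one (by linarith))
    (powSum_isTheta_of_neg_one_lt (by linarith)) using 2 <;> ring

lemma A_one_isTheta : A 1 =Θ[atTop] powLog (3 / 2) (-1) := by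
  convert A_isTheta powSum_neg_one_isTheta
    (powSum_isTheta_of_neg_one_lt (by norm_num)) using 2 <;> norm_num

lemma A_isTheta_of_lt_one (hγ : γ < 1) : A γ =Θ[atTop] powLog (3 / 2) 0 := by
  convert A_isTheta (powSum_isTheta_of_neg_one_lt (by linarith))
    (powSum_isTheta_of_neg_one_lt (by linarith)) using 2 <;> ring

lemma g_nonneg (β : ℝ) : 0 ≤ g β := fun n => by
  have := log_natCast_nonneg n
  unfold g; split_ifs <;> positivity

lemma g_of_two_lt (hβ : 2 < β) : g β =ᶠ[atTop] powLog 0 0 :=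
  .of_eq <| funext fun n => by simp [g, powLog, hβ]

lemma g_two : g 2 =ᶠ[atTop] powLog 0 1 :=
  .of_eq <| funext fun n => by simp [g, powLog]

lemma g_of_one_lt_of_lt_two (hβ₁ : 1 < β) (hβ₂ : β < 2) : g β =ᶠ[atTop] powLog (1 - β / 2) 0 :=
  .of_eq <| funext fun n => by simp [g, powLog, hβ₁, hβ₂.not_gt, hβ₂.ne]

lemma g_one : g 1 =ᶠ[atTop] powLog (1 / 2) (-1 / 2) :=
  .of_eq <| funext fun n => by
    rw [show g 1 n = √(n / Real.log n) by simp [g], sqrt_eq_rpow,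
      div_rpow (Nat.cast_nonneg n) (log_natCast_nonneg n), powLog, neg_div,
      rpow_neg (log_natCast_nonneg n), div_eq_mul_inv]

lemma g_of_lt_one (hβ : β < 1) : g β =ᶠ[atTop] powLog (1 / 2) 0 :=
  .of_eq <| funext fun n => by
    simp [g, powLog, sqrt_eq_rpow, (hβ.trans one_lt_two).not_gt, (hβ.trans one_lt_two).ne,
      hβ.not_gt, hβ.ne]

lemma g_isBigO_sqrt (β : ℝ) : g β =O[atTop] powLog (1 / 2) 0 := by
  rcases lt_trichotomy β 1 with hβ | rfl | hβ
  · exact (g_of_lt_one hβ).isTheta.isBigO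
  · exact g_one.isTheta.isBigO.trans (powLog_isBigO_of_le le_rfl (by norm_num))
  rcases lt_trichotomy β 2 with hβ₂ | rfl | hβ₂
  · exact (g_of_one_lt_of_lt_two hβ hβ₂).isTheta.isBigO.trans
      (powLog_isBigO_of_le (by linarith) le_rfl)
  · exact g_two.isTheta.isBigO.trans (powLog_isLittleO_of_lt (by norm_num) _ _).isBigO
  · exact (g_of_two_lt hβ₂).isTheta.isBigO.trans (powLog_isBigO_of_le (by norm_num) le_rfl)

lemma A_nonneg (γ : ℝ) : 0 ≤ A γ := fun n => by unfold A Z; positivity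

lemma Q_nonneg (γ : ℝ) : 0 ≤ Q γ := fun n => by unfold Q Z; positivity

lemma gA_nonneg (γ β : ℝ) : 0 ≤ fun n => g β n * A γ n := fun n =>
  mul_nonneg (g_nonneg β n) (A_nonneg γ n)

lemma isBigTheta_H_of_isTheta_gA {a b : ℝ} {t : ℕ → ℝ}
    (hgA : (fun n => g β n * A γ n) =Θ[atTop] powLog a b) (hQ : Q γ =O[atTop] powLog a b)
    (ht : powLog a b = t) : IsBigTheta (fun n => H γ β n) t := by
  subst ht
  exact isBigTheta_of_isTheta (fun n => add_nonneg (gA_nonneg γ β n) (Q_nonneg γ n))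
    (powLog_nonneg a b) (hgA.add_isBigO_of_nonneg (gA_nonneg γ β) (Q_nonneg γ) hQ)

lemma isBigTheta_H_of_isTheta_Q {a b : ℝ} {t : ℕ → ℝ}
    (hQ : Q γ =Θ[atTop] powLog a b) (hgA : (fun n => g β n * A γ n) =O[atTop] powLog a b)
    (ht : powLog a b = t) : IsBigTheta (fun n => H γ β n) t := by
  subst ht
  refine isBigTheta_of_isTheta (fun n => add_nonneg (gA_nonneg γ β n) (Q_nonneg γ n))
    (powLog_nonneg a b) ?_
  rw [show (fun n => H γ β n) = Q γ + fun n => g β n * A γ n from funext fun n => add_comm _ _]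
  exact hQ.add_isBigO_of_nonneg (Q_nonneg γ) (gA_nonneg γ β) hgA

lemma isBigTheta_H_of_isBigO_A {a b c : ℝ} {t : ℕ → ℝ}
    (hA : A γ =O[atTop] powLog a b) (hQ : Q γ =Θ[atTop] powLog c b) (hac : 1 / 2 + a ≤ c)
    (ht : powLog c b = t) : IsBigTheta (fun n => H γ β n) t :=
  isBigTheta_H_of_isTheta_Q hQ
    (((g_isBigO_sqrt β).mul_powLog hA).trans (powLog_isBigO_of_le hac (by simp))) ht

lemma H_isBigTheta_of_two_lt (hγ : 2 < γ) :
    (2 < β → IsBigTheta (fun n => H γ β n) (fun n => (n : ℝ))) ∧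
    (β = 2 → IsBigTheta (fun n => H γ β n) (fun n => (n : ℝ) * Real.log n)) ∧
    (1 < β ∧ β < 2 → IsBigTheta (fun n => H γ β n) (fun n => (n : ℝ) ^ (2 - β / 2))) ∧
    (β = 1 → IsBigTheta (fun n => H γ β n)
      (fun n => (n : ℝ) ^ (3 / 2 : ℝ) / Real.sqrt (Real.log n))) ∧
    (β < 1 → IsBigTheta (fun n => H γ β n) (fun n => (n : ℝ) ^ (3 / 2 : ℝ))) := by
  have hA := A_isTheta_of_three_halves_lt (by linarith : 3 / 2 < γ)
  have hQ := Q_isTheta_of_two_lt hγ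
  refine ⟨fun hβ => ?_, ?_, fun ⟨hβ₁, hβ₂⟩ => ?_, ?_, fun hβ => ?_⟩
  · exact isBigTheta_H_of_isTheta_gA ((g_of_two_lt hβ).isTheta.mul_powLog hA)
      (hQ.isBigO.trans (powLog_isBigO_of_le (by norm_num) (by norm_num)))
      (funext fun n => by simp [powLog])
  · rintro rfl
    exact isBigTheta_H_of_isTheta_gA (g_two.isTheta.mul_powLog hA)
      (hQ.isBigO.trans (powLog_isBigO_of_le (by norm_num) (by norm_num)))
      (funext fun n => by simp [powLog])
  · exact isBigTheta_H_of_isTheta_gA ((g_of_one_lt_of_lt_two hβ₁ hβ₂).isTheta.mul_powLog hA)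
      (hQ.isBigO.trans (powLog_isLittleO_of_lt (by linarith) _ _).isBigO)
      (funext fun n => by simp [powLog]; ring_nf)
  · rintro rfl
    exact isBigTheta_H_of_isTheta_gA (g_one.isTheta.mul_powLog hA)
      (hQ.isBigO.trans (powLog_isLittleO_of_lt (by norm_num) _ _).isBigO)
      (funext fun n => by
        norm_num [powLog, sqrt_eq_rpow, div_eq_mul_inv, rpow_neg (log_natCast_nonneg n)])
  · exact isBigTheta_H_of_isTheta_gA ((g_of_lt_one hβ).isTheta.mul_powLog hA)
      (hQ.isBigO.trans (powLog_isLittleO_of_lt (by norm_num) _ _).isBigO)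
      (funext fun n => by norm_num [powLog])

lemma H_isBigTheta_two :
    (2 ≤ β → IsBigTheta (fun n => H 2 β n) (fun n => (n : ℝ) * Real.log n)) ∧
    (1 < β ∧ β < 2 → IsBigTheta (fun n => H 2 β n) (fun n => (n : ℝ) ^ (2 - β / 2))) ∧
    (β = 1 → IsBigTheta (fun n => H 2 β n)
      (fun n => (n : ℝ) ^ (3 / 2 : ℝ) / Real.sqrt (Real.log n))) ∧
    (β < 1 → IsBigTheta (fun n => H 2 β n) (fun n => (n : ℝ) ^ (3 / 2 : ℝ))) := by
  have hA := A_isTheta_of_three_halves_lt (by norm_num : (3 / 2 : ℝ) < 2)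
  have hQ := Q_two_isTheta
  have ht : powLog 1 1 = fun n : ℕ => (n : ℝ) * Real.log n := funext fun n => by simp [powLog]
  refine ⟨fun hβ => ?_, fun ⟨hβ₁, hβ₂⟩ => ?_, ?_, fun hβ => ?_⟩
  · rcases hβ.eq_or_lt with rfl | hβ
    · exact isBigTheta_H_of_isTheta_gA (g_two.isTheta.mul_powLog hA)
        (hQ.isBigO.trans (powLog_isBigO_of_le (by norm_num) (by norm_num))) (by norm_num [ht])
    · exact isBigTheta_H_of_isTheta_Q hQ
        (((g_of_two_lt hβ).isTheta.isBigO.mul_powLog hA.isBigO).trans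
          (powLog_isBigO_of_le (by norm_num) (by norm_num))) ht
  · exact isBigTheta_H_of_isTheta_gA ((g_of_one_lt_of_lt_two hβ₁ hβ₂).isTheta.mul_powLog hA)
      (hQ.isBigO.trans (powLog_isLittleO_of_lt (by linarith) _ _).isBigO)
      (funext fun n => by simp [powLog]; ring_nf)
  · rintro rfl
    exact isBigTheta_H_of_isTheta_gA (g_one.isTheta.mul_powLog hA)
      (hQ.isBigO.trans (powLog_isLittleO_of_lt (by norm_num) _ _).isBigO)
      (funext fun n => by
        norm_num [powLog, sqrt_eq_rpow, div_eq_mul_inv, rpow_neg (log_natCast_nonneg n)])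
  · exact isBigTheta_H_of_isTheta_gA ((g_of_lt_one hβ).isTheta.mul_powLog hA)
      (hQ.isBigO.trans (powLog_isLittleO_of_lt (by norm_num) _ _).isBigO)
      (funext fun n => by norm_num [powLog])

lemma H_isBigTheta_of_three_halves_lt_of_lt_two (hγ₁ : 3 / 2 < γ) (hγ₂ : γ < 2) :
    (2 * γ - 2 ≤ β → IsBigTheta (fun n => H γ β n) (fun n => (n : ℝ) ^ (3 - γ))) ∧
    (1 < β ∧ β < 2 * γ - 2 →
      IsBigTheta (fun n => H γ β n) (fun n => (n : ℝ) ^ (2 - β / 2))) ∧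
    (β = 1 → IsBigTheta (fun n => H γ β n)
      (fun n => (n : ℝ) ^ (3 / 2 : ℝ) / Real.sqrt (Real.log n))) ∧
    (β < 1 → IsBigTheta (fun n => H γ β n) (fun n => (n : ℝ) ^ (3 / 2 : ℝ))) := by
  have hA := A_isTheta_of_three_halves_lt hγ₁
  have hQ := Q_isTheta_of_one_lt_of_lt_two (by linarith) hγ₂
  refine ⟨fun hβ => ?_, fun ⟨hβ₁, hβ₂⟩ => ?_, ?_, fun hβ => ?_⟩
  · refine isBigTheta_H_of_isTheta_Q hQ ?_ (funext fun n => by simp [powLog])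
    rcases lt_trichotomy β 2 with hβ₂ | rfl | hβ₂
    · exact ((g_of_one_lt_of_lt_two (by linarith) hβ₂).isTheta.isBigO.mul_powLog
        hA.isBigO).trans (powLog_isBigO_of_le (by linarith) (by norm_num))
    · exact (g_two.isTheta.isBigO.mul_powLog hA.isBigO).trans
        (powLog_isLittleO_of_lt (by linarith) _ _).isBigO
    · exact ((g_of_two_lt hβ₂).isTheta.isBigO.mul_powLog hA.isBigO).trans
        (powLog_isBigO_of_le (by linarith) (by norm_num))
  · exact isBigTheta_H_of_isTheta_gA
      ((g_of_one_lt_of_lt_two hβ₁ (by linarith)).isTheta.mul_powLog hA)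
      (hQ.isBigO.trans (powLog_isLittleO_of_lt (by linarith) _ _).isBigO)
      (funext fun n => by simp [powLog]; ring_nf)
  · rintro rfl
    exact isBigTheta_H_of_isTheta_gA (g_one.isTheta.mul_powLog hA)
      (hQ.isBigO.trans (powLog_isLittleO_of_lt (by linarith) _ _).isBigO)
      (funext fun n => by
        norm_num [powLog, sqrt_eq_rpow, div_eq_mul_inv, rpow_neg (log_natCast_nonneg n)])
  · exact isBigTheta_H_of_isTheta_gA ((g_of_lt_one hβ).isTheta.mul_powLog hA)
      (hQ.isBigO.trans (powLog_isLittleO_of_lt (by linarith) _ _).isBigO)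
      (funext fun n => by norm_num [powLog])

lemma H_isBigTheta_three_halves :
    (1 < β → IsBigTheta (fun n => H (3 / 2) β n) (fun n => (n : ℝ) ^ (3 / 2 : ℝ))) ∧
    (β = 1 → IsBigTheta (fun n => H (3 / 2) β n)
      (fun n => (n : ℝ) ^ (3 / 2 : ℝ) * Real.sqrt (Real.log n))) ∧
    (β < 1 → IsBigTheta (fun n => H (3 / 2) β n)
      (fun n => (n : ℝ) ^ (3 / 2 : ℝ) * Real.log n)) := by
  have hA := A_three_halves_isTheta
  have hQ : Q (3 / 2) =Θ[atTop] powLog (3 / 2) 0 := by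
    convert Q_isTheta_of_one_lt_of_lt_two (γ := 3 / 2) (by norm_num) (by norm_num) using 2
    norm_num
  refine ⟨fun hβ => ?_, ?_, fun hβ => ?_⟩
  · refine isBigTheta_H_of_isTheta_Q hQ ?_ (funext fun n => by simp [powLog])
    rcases lt_trichotomy β 2 with hβ₂ | rfl | hβ₂
    · exact ((g_of_one_lt_of_lt_two hβ hβ₂).isTheta.isBigO.mul_powLog hA.isBigO).trans
        (powLog_isLittleO_of_lt (by linarith) _ _).isBigO
    · exact (g_two.isTheta.isBigO.mul_powLog hA.isBigO).trans
        (powLog_isLittleO_of_lt (by norm_num) _ _).isBigO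
    · exact ((g_of_two_lt hβ₂).isTheta.isBigO.mul_powLog hA.isBigO).trans
        (powLog_isLittleO_of_lt (by norm_num) _ _).isBigO
  · rintro rfl
    exact isBigTheta_H_of_isTheta_gA (g_one.isTheta.mul_powLog hA)
      (hQ.isBigO.trans (powLog_isBigO_of_le (by norm_num) (by norm_num)))
      (funext fun n => by norm_num [powLog, sqrt_eq_rpow])
  · exact isBigTheta_H_of_isTheta_gA ((g_of_lt_one hβ).isTheta.mul_powLog hA)
      (hQ.isBigO.trans (powLog_isBigO_of_le (by norm_num) (by norm_num)))
      (funext fun n => by norm_num [powLog])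

lemma H_isBigTheta_of_one_lt_of_lt_three_halves (hγ₁ : 1 < γ) (hγ₂ : γ < 3 / 2) :
    IsBigTheta (fun n => H γ β n) (fun n => (n : ℝ) ^ (3 - γ)) :=
  isBigTheta_H_of_isBigO_A (A_isTheta_of_one_lt_of_lt_three_halves hγ₁ hγ₂).isBigO
    (Q_isTheta_of_one_lt_of_lt_two hγ₁ (by linarith)) (by linarith)
    (funext fun n => by simp [powLog])

lemma H_isBigTheta_one :
    IsBigTheta (fun n => H 1 β n) (fun n => (n : ℝ) ^ 2 / Real.log n) :=
  isBigTheta_H_of_isBigO_A A_one_isTheta.isBigO Q_one_isTheta (by norm_num)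
    (funext fun n => by simp [powLog, div_eq_mul_inv, rpow_neg_one])

lemma H_isBigTheta_of_lt_one (hγ : γ < 1) :
    IsBigTheta (fun n => H γ β n) (fun n => (n : ℝ) ^ 2) :=
  isBigTheta_H_of_isBigO_A (A_isTheta_of_lt_one hγ).isBigO (Q_isTheta_of_lt_one hγ) (by norm_num)
    (funext fun n => by simp [powLog])

end

theorem social_broadcast_transport_complexity_order_general (γ β : ℝ) :
    (2 < γ →
      (2 < β → IsBigTheta (fun n => H γ β n) (fun n => (n : ℝ))) ∧
      (β = 2 → IsBigTheta (fun n => H γ β n) (fun n => (n : ℝ) * Real.log n)) ∧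
      (1 < β ∧ β < 2 → IsBigTheta (fun n => H γ β n) (fun n => (n : ℝ) ^ (2 - β / 2))) ∧
      (β = 1 → IsBigTheta (fun n => H γ β n)
        (fun n => (n : ℝ) ^ (3 / 2 : ℝ) / Real.sqrt (Real.log n))) ∧
      (β < 1 → IsBigTheta (fun n => H γ β n) (fun n => (n : ℝ) ^ (3 / 2 : ℝ)))) ∧
    (γ = 2 →
      (2 ≤ β → IsBigTheta (fun n => H γ β n) (fun n => (n : ℝ) * Real.log n)) ∧
      (1 < β ∧ β < 2 → IsBigTheta (fun n => H γ β n) (fun n => (n : ℝ) ^ (2 - β / 2))) ∧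
      (β = 1 → IsBigTheta (fun n => H γ β n)
        (fun n => (n : ℝ) ^ (3 / 2 : ℝ) / Real.sqrt (Real.log n))) ∧
      (β < 1 → IsBigTheta (fun n => H γ β n) (fun n => (n : ℝ) ^ (3 / 2 : ℝ)))) ∧
    (3 / 2 < γ ∧ γ < 2 →
      (2 * γ - 2 ≤ β → IsBigTheta (fun n => H γ β n) (fun n => (n : ℝ) ^ (3 - γ))) ∧
      (1 < β ∧ β < 2 * γ - 2 →
        IsBigTheta (fun n => H γ β n) (fun n => (n : ℝ) ^ (2 - β / 2))) ∧
      (β = 1 → IsBigTheta (fun n => H γ β n)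
        (fun n => (n : ℝ) ^ (3 / 2 : ℝ) / Real.sqrt (Real.log n))) ∧
      (β < 1 → IsBigTheta (fun n => H γ β n) (fun n => (n : ℝ) ^ (3 / 2 : ℝ)))) ∧
    (γ = 3 / 2 →
      (1 < β → IsBigTheta (fun n => H γ β n) (fun n => (n : ℝ) ^ (3 / 2 : ℝ))) ∧
      (β = 1 → IsBigTheta (fun n => H γ β n)
        (fun n => (n : ℝ) ^ (3 / 2 : ℝ) * Real.sqrt (Real.log n))) ∧
      (β < 1 → IsBigTheta (fun n => H γ β n)
        (fun n => (n : ℝ) ^ (3 / 2 : ℝ) * Real.log n))) ∧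
    (1 < γ ∧ γ < 3 / 2 → IsBigTheta (fun n => H γ β n) (fun n => (n : ℝ) ^ (3 - γ))) ∧
    (γ = 1 → IsBigTheta (fun n => H γ β n) (fun n => (n : ℝ) ^ 2 / Real.log n)) ∧
    (γ < 1 → IsBigTheta (fun n => H γ β n) (fun n => (n : ℝ) ^ 2)) := by
  refine ⟨H_isBigTheta_of_two_lt, ?_,
    fun ⟨hγ₁, hγ₂⟩ => H_isBigTheta_of_three_halves_lt_of_lt_two hγ₁ hγ₂, ?_,
    fun ⟨hγ₁, hγ₂⟩ => H_isBigTheta_of_one_lt_of_lt_three_halves hγ₁ hγ₂, ?_,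
    H_isBigTheta_of_lt_one⟩
  · rintro rfl
    exact H_isBigTheta_two
  · rintro rfl
    exact H_isBigTheta_three_halves
  · rintro rfl
    exact H_isBigTheta_one

theorem social_broadcast_transport_complexity_order (γ β : ℝ) (hγ : 0 ≤ γ) (hβ : 0 ≤ β) :
    (2 < γ →
      (2 < β → IsBigTheta (fun n => H γ β n) (fun n => (n : ℝ))) ∧
      (β = 2 → IsBigTheta (fun n => H γ β n) (fun n => (n : ℝ) * Real.log n)) ∧
      (1 < β ∧ β < 2 → IsBigTheta (fun n => H γ β n) (fun n => (n : ℝ) ^ (2 - β / 2))) ∧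
      (β = 1 → IsBigTheta (fun n => H γ β n)
        (fun n => (n : ℝ) ^ (3 / 2 : ℝ) / Real.sqrt (Real.log n))) ∧
      (β < 1 → IsBigTheta (fun n => H γ β n) (fun n => (n : ℝ) ^ (3 / 2 : ℝ)))) ∧
    (γ = 2 →
      (2 ≤ β → IsBigTheta (fun n => H γ β n) (fun n => (n : ℝ) * Real.log n)) ∧
      (1 < β ∧ β < 2 → IsBigTheta (fun n => H γ β n) (fun n => (n : ℝ) ^ (2 - β / 2))) ∧
      (β = 1 → IsBigTheta (fun n => H γ β n)
        (fun n => (n : ℝ) ^ (3 / 2 : ℝ) / Real.sqrt (Real.log n))) ∧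
      (β < 1 → IsBigTheta (fun n => H γ β n) (fun n => (n : ℝ) ^ (3 / 2 : ℝ)))) ∧
    (3 / 2 < γ ∧ γ < 2 →
      (2 * γ - 2 ≤ β → IsBigTheta (fun n => H γ β n) (fun n => (n : ℝ) ^ (3 - γ))) ∧
      (1 < β ∧ β < 2 * γ - 2 →
        IsBigTheta (fun n => H γ β n) (fun n => (n : ℝ) ^ (2 - β / 2))) ∧
      (β = 1 → IsBigTheta (fun n => H γ β n)
        (fun n => (n : ℝ) ^ (3 / 2 : ℝ) / Real.sqrt (Real.log n))) ∧
      (β < 1 → IsBigTheta (fun n => H γ β n) (fun n => (n : ℝ) ^ (3 / 2 : ℝ)))) ∧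
    (γ = 3 / 2 →
      (1 < β → IsBigTheta (fun n => H γ β n) (fun n => (n : ℝ) ^ (3 / 2 : ℝ))) ∧
      (β = 1 → IsBigTheta (fun n => H γ β n)
        (fun n => (n : ℝ) ^ (3 / 2 : ℝ) * Real.sqrt (Real.log n))) ∧
      (β < 1 → IsBigTheta (fun n => H γ β n)
        (fun n => (n : ℝ) ^ (3 / 2 : ℝ) * Real.log n))) ∧
    (1 < γ ∧ γ < 3 / 2 → IsBigTheta (fun n => H γ β n) (fun n => (n : ℝ) ^ (3 - γ))) ∧
    (γ = 1 → IsBigTheta (fun n => H γ β n) (fun n => (n : ℝ) ^ 2 / Real.log n)) ∧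
    (γ < 1 → IsBigTheta (fun n => H γ β n) (fun n => (n : ℝ) ^ 2)) :=
  social_broadcast_transport_complexity_order_general γ β
end
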